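/- In the possibilistic path program, the necessity degree of path(x,y) computed by the max-min recursion equals the maximum over all paths from x to y of the minimum edge weight along the path: formally, on a finite directed graph with edge weights w : E → [0,1], the function f defined as the least fixed point of f(x,x) = 1 and f(x,y) = max over edges (z,y) of min(f(x,z), w(z,y)) satisfies f(x,y) = max over directed paths π from x to y of min of the weights of edges in π (with f(x,y) = 0 if no path exists). -/

import Mathlib

/-- The min-weight of the path that starts at `x` and successively visits the
vertices of `l` (1 for the empty path). -/
noncomputable def chainW {V : Type} (w : V → V → ℝ) : V → List V → ℝ
  | _, [] => 1
  | x, z :: l => min (w x z) (chainW w z l)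

/-!
The widest-path value `W x y = sup_π min_{e ∈ π} w e` solves the Bellman recursion, because
every nonempty path to `y` is a path to some `z` followed by the edge `z → y`; so the least
solution `f` satisfies `f ≤ W`. Conversely, any `g` with `g x x = 1` and
`min (g x z) (w z y) ≤ g x y` dominates the weight of every path, by induction on the path
from its end; every solution of the recursion is such a `g`, so `W ≤ f`.
-/

namespace MaxMinPath

variable {V : Type} {w : V → V → ℝ}

/-- Vertex lists `l` such that `x :: l` is a path from `x` to `y`. -/
abbrev PathTo (x y : V) : Type := {l : List V // (x :: l).getLast (List.cons_ne_nil x l) = y}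

noncomputable def widestPathWeight (w : V → V → ℝ) (x y : V) : ℝ :=
  ⨆ l : PathTo x y, chainW w x l.1

namespace PathTo

instance (x y : V) : Nonempty (PathTo x y) := ⟨⟨[y], rfl⟩⟩

def snoc {x z : V} (l : PathTo x z) (y : V) : PathTo x y :=
  ⟨l.1 ++ [y], by simp⟩

theorem eq_snoc_dropLast {x y : V} (hxy : x ≠ y) (l : PathTo x y) :
    ∃ (z : V) (p : PathTo x z), l = p.snoc y := by
  have hl : l.1 ≠ [] := by
    rintro h
    exact hxy (by simpa [h] using l.2)
  refine ⟨_, ⟨l.1.dropLast, rfl⟩, Subtype.ext ?_⟩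
  have hlast : l.1.getLast hl = y := by simpa [List.getLast_cons hl] using l.2
  simpa [snoc, hlast] using (List.dropLast_append_getLast hl).symm

end PathTo

theorem chainW_nonneg (hw : ∀ a b, 0 ≤ w a b) (x : V) (l : List V) : 0 ≤ chainW w x l := by
  induction l generalizing x with
  | nil => exact zero_le_one
  | cons z l ih => exact le_min (hw x z) (ih z)

theorem chainW_le_one (hw : ∀ a b, w a b ≤ 1) (x : V) (l : List V) : chainW w x l ≤ 1 := by
  cases l with
  | nil => exact le_rfl
  | cons z l => exact min_le_of_left_le (hw x z)

theorem chainW_append_singleton (x y : V) (l : List V) :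
    chainW w x (l ++ [y]) =
      min (chainW w x l) (w ((x :: l).getLast (List.cons_ne_nil x l)) y) := by
  induction l generalizing x with
  | nil => simp [chainW, min_comm]
  | cons z l ih => simp only [List.cons_append, chainW, ih z, List.getLast_cons_cons, min_assoc]

theorem chainW_snoc {x z : V} (l : PathTo x z) (y : V) :
    chainW w x (l.snoc y).1 = min (chainW w x l.1) (w z y) := by
  rw [PathTo.snoc, chainW_append_singleton, l.2]

theorem chainW_le_of_min_le {g : V → V → ℝ} (hrefl : ∀ x, 1 ≤ g x x)
    (hg : ∀ x z y, min (g x z) (w z y) ≤ g x y) (x : V) (l : List V) :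
    chainW w x l ≤ g x ((x :: l).getLast (List.cons_ne_nil x l)) := by
  induction l using List.reverseRecOn with
  | nil => exact hrefl x
  | append_singleton l y ih =>
    rw [chainW_append_singleton]
    simpa using (min_le_min_right _ ih).trans (hg _ _ y)

theorem le_widestPathWeight (hw : ∀ a b, w a b ≤ 1) {x y : V} (l : PathTo x y) :
    chainW w x l.1 ≤ widestPathWeight w x y :=
  le_ciSup ⟨1, Set.forall_mem_range.2 fun l => chainW_le_one hw x l.1⟩ l

theorem widestPathWeight_le_one (hw : ∀ a b, w a b ≤ 1) (x y : V) :
    widestPathWeight w x y ≤ 1 :=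
  ciSup_le fun l => chainW_le_one hw x l.1

theorem widestPathWeight_self (hw : ∀ a b, w a b ≤ 1) (x : V) : widestPathWeight w x x = 1 :=
  (widestPathWeight_le_one hw x x).antisymm (le_widestPathWeight hw (⟨[], rfl⟩ : PathTo x x))

theorem min_widestPathWeight_le (hw : ∀ a b, w a b ≤ 1) (x z y : V) :
    min (widestPathWeight w x z) (w z y) ≤ widestPathWeight w x y := by
  have hmin : min (widestPathWeight w x z) (w z y) =
      ⨆ l : PathTo x z, min (chainW w x l.1) (w z y) :=
    Monotone.map_ciSup_of_continuousAt (f := fun t => min t (w z y))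
      (continuous_id.min continuous_const).continuousAt (fun _ _ h => min_le_min_right _ h)
      ⟨1, Set.forall_mem_range.2 fun l => chainW_le_one hw x l.1⟩
  rw [hmin]
  exact ciSup_le fun l => chainW_snoc l y ▸ le_widestPathWeight hw (l.snoc y)

theorem widestPathWeight_le_sup' [Fintype V] [Nonempty V] (hw : ∀ a b, w a b ≤ 1) {x y : V}
    (hxy : x ≠ y) : widestPathWeight w x y ≤
      Finset.univ.sup' Finset.univ_nonempty (fun z => min (widestPathWeight w x z) (w z y)) := by
  refine ciSup_le fun l => ?_
  obtain ⟨z, p, rfl⟩ := PathTo.eq_snoc_dropLast hxy l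
  rw [chainW_snoc]
  exact (min_le_min_right _ (le_widestPathWeight hw p)).trans
    (Finset.le_sup' (fun z => min (widestPathWeight w x z) (w z y)) (Finset.mem_univ z))

theorem widestPathWeight_eq_sup' [Fintype V] [Nonempty V] (hw : ∀ a b, w a b ≤ 1) {x y : V}
    (hxy : x ≠ y) : widestPathWeight w x y =
      Finset.univ.sup' Finset.univ_nonempty (fun z => min (widestPathWeight w x z) (w z y)) :=
  (widestPathWeight_le_sup' hw hxy).antisymm
    (Finset.sup'_le _ _ fun z _ => min_widestPathWeight_le hw x z y)

theorem widestPathWeight_nonneg (hw₀ : ∀ a b, 0 ≤ w a b) (hw₁ : ∀ a b, w a b ≤ 1)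
    (x y : V) : 0 ≤ widestPathWeight w x y :=
  (chainW_nonneg hw₀ x [y]).trans (le_widestPathWeight hw₁ (⟨[y], rfl⟩ : PathTo x y))

theorem widestPathWeight_le_of_min_le {g : V → V → ℝ} (hrefl : ∀ x, 1 ≤ g x x)
    (hg : ∀ x z y, min (g x z) (w z y) ≤ g x y) (x y : V) : widestPathWeight w x y ≤ g x y :=
  ciSup_le fun l => (chainW_le_of_min_le hrefl hg x l.1).trans_eq (congrArg (g x) l.2)

end MaxMinPath

open MaxMinPath in
theorem maxmin_path_lfp_general (V : Type) [Fintype V] [Nonempty V]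
    (w : V → V → ℝ) (hw : ∀ a b, w a b ∈ Set.Icc (0:ℝ) 1)
    (f : V → V → ℝ)
    (hrefl : ∀ x, f x x = 1)
    (hstep : ∀ x y, x ≠ y →
      f x y = Finset.univ.sup' Finset.univ_nonempty (fun z => min (f x z) (w z y)))
    (hleast : ∀ g : V → V → ℝ, (∀ x y, g x y ∈ Set.Icc (0:ℝ) 1) →
      (∀ x, g x x = 1) →
      (∀ x y, x ≠ y →
        g x y = Finset.univ.sup' Finset.univ_nonempty (fun z => min (g x z) (w z y))) →
      ∀ x y, f x y ≤ g x y) :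
    ∀ x y : V,
      f x y = ⨆ l : {l : List V // (x :: l).getLast (List.cons_ne_nil x l) = y},
        chainW w x l.1 := by
  have hw₀ : ∀ a b, 0 ≤ w a b := fun a b => (hw a b).1
  have hw₁ : ∀ a b, w a b ≤ 1 := fun a b => (hw a b).2
  have hf : ∀ x z y, min (f x z) (w z y) ≤ f x y := by
    intro x z y
    rcases eq_or_ne x y with rfl | hxy
    · exact hrefl x ▸ min_le_of_right_le (hw₁ z x)
    · exact hstep x y hxy ▸ Finset.le_sup' (fun z => min (f x z) (w z y)) (Finset.mem_univ z)
  intro x y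
  refine le_antisymm ?_ (widestPathWeight_le_of_min_le (fun x => (hrefl x).ge) hf x y)
  exact hleast (widestPathWeight w)
    (fun x y => ⟨widestPathWeight_nonneg hw₀ hw₁ x y, widestPathWeight_le_one hw₁ x y⟩)
    (widestPathWeight_self hw₁) (fun _ _ => widestPathWeight_eq_sup' hw₁) x y

/-- on a finite directed graph with edge weights `w : V → V → [0,1]`
(`w z y = 0` when there is no edge), the least fixed point `f` of the max-min
Bellman recursion `f x x = 1`, `f x y = max_z min (f x z) (w z y)` (for `y ≠ x`)
equals, for all `x y`, the supremum over all directed paths from `x` to `y` of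
the minimum edge weight along the path (`0` if there is no path, the empty path
from `x` to `x` having weight 1). -/
theorem maxmin_path_lfp (V : Type) [Fintype V] [DecidableEq V] [Nonempty V]
    (w : V → V → ℝ) (hw : ∀ a b, w a b ∈ Set.Icc (0:ℝ) 1)
    (f : V → V → ℝ) (hf01 : ∀ x y, f x y ∈ Set.Icc (0:ℝ) 1)
    (hrefl : ∀ x, f x x = 1)
    (hstep : ∀ x y, x ≠ y →
      f x y = Finset.univ.sup' Finset.univ_nonempty (fun z => min (f x z) (w z y)))
    (hleast : ∀ g : V → V → ℝ, (∀ x y, g x y ∈ Set.Icc (0:ℝ) 1) →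
      (∀ x, g x x = 1) →
      (∀ x y, x ≠ y →
        g x y = Finset.univ.sup' Finset.univ_nonempty (fun z => min (g x z) (w z y))) →
      ∀ x y, f x y ≤ g x y) :
    ∀ x y : V,
      f x y = ⨆ l : {l : List V // (x :: l).getLast (List.cons_ne_nil x l) = y},
        chainW w x l.1 :=
  maxmin_path_lfp_general V w hw f hrefl hstep hleast
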